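/- If F1 and F2 are generalized fighting fish, then their concatenation F1 ⊕ F2 = F1 · E · F2 · W is a generalized fighting fish. -/

import Mathlib

/-- The four-letter alphabet of steps. -/
inductive Letter : Type
  | E | N | W | S
deriving DecidableEq, Repr

open Letter

/-- Fighting fish: words obtainable from `ENWS` by upper, lower and double gluings. -/
inductive IsFF : List Letter → Prop
  | base : IsFF [E, N, W, S]
  | upper (u v : List Letter) :
      IsFF (u ++ [W] ++ v) → IsFF (u ++ [N, W, S] ++ v)
  | lower (u v : List Letter) :
      IsFF (u ++ [N] ++ v) → IsFF (u ++ [E, N, W] ++ v)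
  | double (u v : List Letter) :
      IsFF (u ++ [W, N] ++ v) → IsFF (u ++ [N, W] ++ v)

/-- Generalized fighting fish: words obtainable from the empty word by the
operations `∇_k` (replace `N^k` by `E N^k W`) and `△_k` (replace `W^k` by `N W^k S`),
for `k ≥ 0`. -/
inductive IsGFF : List Letter → Prop
  | base : IsGFF []
  | nabla (u v : List Letter) (k : ℕ) :
      IsGFF (u ++ List.replicate k N ++ v) →
      IsGFF (u ++ [E] ++ List.replicate k N ++ [W] ++ v)
  | delta (u v : List Letter) (k : ℕ) :
      IsGFF (u ++ List.replicate k W ++ v) →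
      IsGFF (u ++ [N] ++ List.replicate k W ++ [S] ++ v)

/-- The latitude of a word: number of `N`'s minus number of `S`'s. -/
def lat (w : List Letter) : ℤ := (w.count N : ℤ) - (w.count S : ℤ)

/-- The longitude of a word: number of `E`'s minus number of `W`'s. -/
def long (w : List Letter) : ℤ := (w.count E : ℤ) - (w.count W : ℤ)

/-- The size of a word: half its length. -/
def size (w : List Letter) : ℕ := w.length / 2

/-- `∇_0` inserts `E W` anywhere; replaying a derivation of `w` between these two letters then
builds `E w W`, since every `∇_k` and `△_k` step of it is a local rewrite. -/
theorem IsGFF.insert_E_W {w : List Letter} (hw : IsGFF w) {x y : List Letter}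
    (hxy : IsGFF (x ++ y)) : IsGFF (x ++ [E] ++ w ++ [W] ++ y) := by
  induction hw with
  | base => simpa using IsGFF.nabla x y 0 (by simpa using hxy)
  | nabla u v k _ ih =>
    simpa using IsGFF.nabla (x ++ [E] ++ u) (v ++ [W] ++ y) k (by simpa using ih)
  | delta u v k _ ih =>
    simpa using IsGFF.delta (x ++ [E] ++ u) (v ++ [W] ++ y) k (by simpa using ih)

/-- The concatenation `F1 ⊕ F2 = F1 · E · F2 · W` of two generalized fighting fish
is a generalized fighting fish. -/
theorem gff_oplus (F1 F2 : List Letter) (h1 : IsGFF F1) (h2 : IsGFF F2) :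
    IsGFF (F1 ++ [E] ++ F2 ++ [W]) := by
  simpa using h2.insert_E_W (x := F1) (y := []) (by simpa using h1)
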